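/- For two Gaussian measures N(m_1, σ_1²) and N(m_2, σ_2²) on R with σ_1, σ_2 > 0, the squared 2-Wasserstein distance equals (m_1 − m_2)² + (σ_1 − σ_2)². -/

import Mathlib

/-! For any coupling `(X, Y)` of `μ` and `ν`,
`E (X - Y)² = (E X - E Y)² + Var (X - Y)`, and Cauchy–Schwarz for the covariance gives
`Var (X - Y) ≥ (√Var X - √Var Y)²`. For the Gaussians this lower bound is attained by the
coupling `x ↦ (σ₁ x + m₁, σ₂ x + m₂)` of the standard Gaussian with itself, since
`X - Y ∼ N(m₁ - m₂, (σ₁ - σ₂)²)`. -/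

open MeasureTheory ProbabilityTheory
open scoped ENNReal

/-- Squared 2-Wasserstein distance on `ℝ`: infimum of the quadratic transportation cost
over all couplings of `μ` and `ν`. -/
noncomputable def W2sq (μ ν : Measure ℝ) : ℝ≥0∞ :=
  sInf {c : ℝ≥0∞ | ∃ π : Measure (ℝ × ℝ), π.map Prod.fst = μ ∧ π.map Prod.snd = ν ∧
    c = ∫⁻ p, ENNReal.ofReal ((p.1 - p.2) ^ 2) ∂π}

open scoped NNReal

section Moments

variable {Ω : Type*} [MeasurableSpace Ω] {P : Measure Ω} {X Y : Ω → ℝ}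

lemma covariance_le_sqrt_variance_mul_sqrt_variance [IsFiniteMeasure P] (hX : MemLp X 2 P)
    (hY : MemLp Y 2 P) : cov[X, Y; P] ≤ √Var[X; P] * √Var[Y; P] := by
  have hquad (t : ℝ) : 0 ≤ Var[X; P] * (t * t) + 2 * cov[X, Y; P] * t + Var[Y; P] := by
    have h := variance_nonneg (fun ω ↦ t * X ω + Y ω) P
    rw [variance_fun_add (hX.const_mul t) hY, variance_const_mul,
      covariance_const_mul_left] at h
    linarith
  have hdisc := discrim_le_zero hquad
  rw [discrim] at hdisc
  rw [← Real.sqrt_mul (variance_nonneg _ _)]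
  exact Real.le_sqrt_of_sq_le (by nlinarith)

lemma sq_sqrt_variance_sub_sqrt_variance_le [IsFiniteMeasure P] (hX : MemLp X 2 P)
    (hY : MemLp Y 2 P) : (√Var[X; P] - √Var[Y; P]) ^ 2 ≤ Var[X - Y; P] := by
  rw [variance_sub hX hY, sub_sq, Real.sq_sqrt (variance_nonneg _ _),
    Real.sq_sqrt (variance_nonneg _ _)]
  linarith [covariance_le_sqrt_variance_mul_sqrt_variance hX hY]

lemma integral_sq_eq_sq_integral_add_variance [IsProbabilityMeasure P] (hX : MemLp X 2 P) :
    ∫ ω, X ω ^ 2 ∂P = (∫ ω, X ω ∂P) ^ 2 + Var[X; P] := by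
  rw [variance_eq_sub hX]
  simp only [Pi.pow_apply]
  ring

lemma sq_sub_add_sq_sub_le_integral_sq_sub [IsProbabilityMeasure P] (hX : MemLp X 2 P)
    (hY : MemLp Y 2 P) :
    (∫ ω, X ω ∂P - ∫ ω, Y ω ∂P) ^ 2 + (√Var[X; P] - √Var[Y; P]) ^ 2
      ≤ ∫ ω, (X ω - Y ω) ^ 2 ∂P := by
  have h := integral_sq_eq_sq_integral_add_variance (hX.sub hY)
  simp only [Pi.sub_apply] at h
  rw [h, integral_sub (hX.integrable one_le_two) (hY.integrable one_le_two)]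
  exact add_le_add le_rfl (sq_sqrt_variance_sub_sqrt_variance_le hX hY)

end Moments

lemma W2sq_map_le_lintegral {Ω : Type*} [MeasurableSpace Ω] {P : Measure Ω} {X Y : Ω → ℝ}
    (hX : Measurable X) (hY : Measurable Y) :
    W2sq (P.map X) (P.map Y) ≤ ∫⁻ ω, ENNReal.ofReal ((X ω - Y ω) ^ 2) ∂P := by
  refine sInf_le ⟨P.map fun ω ↦ (X ω, Y ω), ?_, ?_, ?_⟩
  · rw [Measure.map_map measurable_fst (hX.prodMk hY)]
    rfl
  · rw [Measure.map_map measurable_snd (hX.prodMk hY)]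
    rfl
  · rw [lintegral_map (by fun_prop) (hX.prodMk hY)]

lemma ofReal_le_W2sq {μ ν : Measure ℝ} [IsProbabilityMeasure μ] (hμ : MemLp id 2 μ)
    (hν : MemLp id 2 ν) :
    ENNReal.ofReal ((∫ x, x ∂μ - ∫ x, x ∂ν) ^ 2 + (√Var[id; μ] - √Var[id; ν]) ^ 2)
      ≤ W2sq μ ν := by
  refine le_sInf ?_
  rintro _ ⟨π, rfl, rfl, rfl⟩
  have : IsProbabilityMeasure π := Measure.isProbabilityMeasure_of_map Prod.fst
  have h₁ : MemLp Prod.fst 2 π :=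
    (memLp_map_measure_iff aestronglyMeasurable_id measurable_fst.aemeasurable).1 hμ
  have h₂ : MemLp Prod.snd 2 π :=
    (memLp_map_measure_iff aestronglyMeasurable_id measurable_snd.aemeasurable).1 hν
  have hcost : Integrable (fun p : ℝ × ℝ ↦ (p.1 - p.2) ^ 2) π := (h₁.sub h₂).integrable_sq
  rw [integral_map (f := fun x ↦ x) measurable_fst.aemeasurable aestronglyMeasurable_id,
    integral_map (f := fun x ↦ x) measurable_snd.aemeasurable aestronglyMeasurable_id,
    variance_id_map measurable_fst.aemeasurable, variance_id_map measurable_snd.aemeasurable,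
    ← ofReal_integral_eq_lintegral_ofReal hcost (ae_of_all _ fun _ ↦ sq_nonneg _)]
  exact ENNReal.ofReal_le_ofReal (sq_sub_add_sq_sub_le_integral_sq_sub h₁ h₂)

lemma gaussianReal_map_const_mul_add (m σ : ℝ) :
    (gaussianReal 0 1).map (fun x ↦ σ * x + m) = gaussianReal m (σ ^ 2).toNNReal := by
  rw [show (fun x ↦ σ * x + m) = (· + m) ∘ (σ * ·) from rfl,
    ← Measure.map_map (measurable_add_const m) (measurable_const_mul σ),
    gaussianReal_map_const_mul, gaussianReal_map_add_const]
  congr 1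
  · ring
  · ext
    simp [Real.coe_toNNReal _ (sq_nonneg σ)]

lemma lintegral_ofReal_sq_gaussianReal (m : ℝ) (v : ℝ≥0) :
    ∫⁻ x, ENNReal.ofReal (x ^ 2) ∂gaussianReal m v = ENNReal.ofReal (m ^ 2 + v) := by
  have h : MemLp (fun x ↦ x) 2 (gaussianReal m v) := memLp_id_gaussianReal 2
  rw [← ofReal_integral_eq_lintegral_ofReal h.integrable_sq (ae_of_all _ fun _ ↦ sq_nonneg _),
    integral_sq_eq_sq_integral_add_variance h, integral_id_gaussianReal,
    variance_fun_id_gaussianReal]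

/-- For Gaussian measures `N(m₁, σ₁²)` and `N(m₂, σ₂²)` on `ℝ` with
`σ₁, σ₂ > 0`, `W₂²(μ,ν) = (m₁ - m₂)² + (σ₁ - σ₂)²`. -/
theorem W2sq_gaussianReal
    (m₁ m₂ σ₁ σ₂ : ℝ) (hσ₁ : 0 < σ₁) (hσ₂ : 0 < σ₂) :
    W2sq (gaussianReal m₁ (σ₁ ^ 2).toNNReal) (gaussianReal m₂ (σ₂ ^ 2).toNNReal) =
      ENNReal.ofReal ((m₁ - m₂) ^ 2 + (σ₁ - σ₂) ^ 2) := by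
  apply le_antisymm
  · calc W2sq (gaussianReal m₁ (σ₁ ^ 2).toNNReal) (gaussianReal m₂ (σ₂ ^ 2).toNNReal)
        = W2sq ((gaussianReal 0 1).map (fun x ↦ σ₁ * x + m₁))
            ((gaussianReal 0 1).map (fun x ↦ σ₂ * x + m₂)) := by
          rw [gaussianReal_map_const_mul_add, gaussianReal_map_const_mul_add]
      _ ≤ ∫⁻ x, ENNReal.ofReal ((σ₁ * x + m₁ - (σ₂ * x + m₂)) ^ 2) ∂gaussianReal 0 1 :=
          W2sq_map_le_lintegral (by fun_prop) (by fun_prop)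
      _ = ∫⁻ x, ENNReal.ofReal (x ^ 2)
            ∂(gaussianReal 0 1).map (fun x ↦ (σ₁ - σ₂) * x + (m₁ - m₂)) := by
          rw [lintegral_map (by fun_prop) (by fun_prop)]
          congr with x
          ring_nf
      _ = ENNReal.ofReal ((m₁ - m₂) ^ 2 + (σ₁ - σ₂) ^ 2) := by
          rw [gaussianReal_map_const_mul_add, lintegral_ofReal_sq_gaussianReal,
            Real.coe_toNNReal _ (sq_nonneg _)]
  · have h := ofReal_le_W2sq (memLp_id_gaussianReal (μ := m₁) (v := (σ₁ ^ 2).toNNReal) 2)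
      (memLp_id_gaussianReal (μ := m₂) (v := (σ₂ ^ 2).toNNReal) 2)
    rwa [integral_id_gaussianReal, integral_id_gaussianReal, variance_id_gaussianReal,
      variance_id_gaussianReal, Real.coe_toNNReal _ (sq_nonneg _),
      Real.coe_toNNReal _ (sq_nonneg _), Real.sqrt_sq hσ₁.le, Real.sqrt_sq hσ₂.le] at h
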